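/- arXiv:2206.04154 — 7 statements merged into one kernel-verified Lean document; each statement's English description precedes it below -/
import Mathlib

section
/- Every strong tournament on n ≥ 3 vertices contains a directed cycle of every length i with 3 ≤ i ≤ n (Moon's theorem: strong tournaments are vertex-pancyclic in particular pancyclic). -/
variable {V : Type*}

def IsTournament (r : V → V → Prop) : Prop :=
  (∀ v, ¬ r v v) ∧ ∀ x y : V, x ≠ y → (r x y ↔ ¬ r y x)

def IsStrong (r : V → V → Prop) : Prop :=
  ∀ x y : V, Relation.ReflTransGen r x y

def IsKing (r : V → V → Prop) (k : V) : Prop :=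
  ∀ v, v ≠ k → r k v ∨ ∃ u, r k u ∧ r u v

def IsKingOn (r : V → V → Prop) (S : Set V) (k : V) : Prop :=
  k ∈ S ∧ ∀ v ∈ S, v ≠ k → r k v ∨ ∃ u ∈ S, r k u ∧ r u v

def IsStrongOn (r : V → V → Prop) (S : Set V) : Prop :=
  ∀ x ∈ S, ∀ y ∈ S, Relation.ReflTransGen (fun a b => a ∈ S ∧ b ∈ S ∧ r a b) x y

def IsDiCycle (r : V → V → Prop) (c : List V) : Prop :=
  c.Nodup ∧ 3 ≤ c.length ∧ c.Chain' r ∧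
    ∀ x y, c.getLast? = some x → c.head? = some y → r x y

lemma lastTrue (P : ℕ → Prop) : ∀ (t a : ℕ), P a → ¬ P (a + t) → ∃ j, P j ∧ ¬ P (j + 1) := by
  intro t
  induction t with
  | zero => intro a ha hb; exact absurd ha hb
  | succ t ih =>
    intro a ha hb
    by_cases h : P (a + 1)
    · exact ih (a + 1) h (by rwa [show a + 1 + t = a + (t + 1) by omega])
    · exact ⟨a, ha, h⟩

lemma reach_closed {r : V → V → Prop} {T : Set V} (hT : ∀ x ∈ T, ∀ y, r x y → y ∈ T)
    {x y : V} (h : Relation.ReflTransGen r x y) (hx : x ∈ T) : y ∈ T := by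
  induction h with
  | refl => exact hx
  | tail _ hr ih => exact hT _ ih _ hr

lemma build_cycle (r : V → V → Prop) (f : ℕ → V) (m : ℕ) (hm : 3 ≤ m)
    (hinj : ∀ i < m, ∀ j < m, f i = f j → i = j)
    (hch : ∀ i, i + 1 < m → r (f i) (f (i + 1)))
    (hwrap : r (f (m - 1)) (f 0)) :
    IsDiCycle r ((List.range m).map f) ∧ ((List.range m).map f).length = m := by
  have hlen : ((List.range m).map f).length = m := by simp
  refine ⟨⟨?_, by omega, ?_, ?_⟩, hlen⟩
  · exact (List.nodup_range (n := m)).map_on (by simpa using hinj)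
  · apply List.isChain_iff_getElem.mpr
    intro i hi
    simp only [hlen] at hi
    simp only [List.get_eq_getElem, List.getElem_map, List.getElem_range]
    exact hch i (by omega)
  · intro x y hx hy
    rw [List.getLast?_eq_getElem?, List.getElem?_eq_getElem (by omega)] at hx
    rw [List.head?_eq_getElem?, List.getElem?_eq_getElem (by omega)] at hy
    simp only [hlen, List.getElem_map, List.getElem_range, Option.some.injEq] at hx hy
    subst hx hy
    exact hwrap

lemma extend_cycle [Fintype V] (r : V → V → Prop)
    (hT : IsTournament r) (hS : IsStrong r) (c : List V) (hc : IsDiCycle r c)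
    (hlt : c.length < Fintype.card V) :
    ∃ c' : List V, IsDiCycle r c' ∧ c'.length = c.length + 1 := by
  classical
  obtain ⟨hirr, htot⟩ := hT
  have hasym : ∀ x y : V, r x y → ¬ r y x := by
    intro x y hxy hyx
    by_cases h : x = y
    · exact hirr x (h ▸ hxy)
    · exact (htot x y h).mp hxy hyx
  have hchoose : ∀ x y : V, x ≠ y → ¬ r y x → r x y := by
    intro x y h hn
    exact (htot x y h).mpr hn
  obtain ⟨hnd, hlen3, hch, hwrap⟩ := hc
  set k := c.length with hk
  have hkpos : 0 < k := by omega
  -- outside vertex exists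
  have hout : ∃ v : V, v ∉ c := by
    by_contra hall
    push_neg at hall
    have : (Finset.univ : Finset V).card ≤ c.toFinset.card :=
      Finset.card_le_card (fun x _ => by simpa using hall x)
    rw [List.toFinset_card_of_nodup hnd] at this
    simp only [Finset.card_univ] at this
    omega
  -- cyclic indexing
  set g : ℕ → V := fun j => c.get ⟨j % k, Nat.mod_lt _ hkpos⟩ with hg
  have hgmem : ∀ j, g j ∈ c := fun j => List.get_mem _ _
  have hginj : ∀ j1 j2, g j1 = g j2 → j1 % k = j2 % k := by
    intro j1 j2 h
    have := (List.Nodup.get_inj_iff hnd).mp h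
    simpa using this
  have hgper : ∀ j, g (j + k) = g j := by
    intro j; simp only [hg, Nat.add_mod_right]
  have hgperq : ∀ j q, g (j + q * k) = g j := by
    intro j q
    induction q with
    | zero => simp
    | succ q ih => rw [show j + (q + 1) * k = (j + q * k) + k by ring, hgper, ih]
  have hedge : ∀ j, r (g j) (g (j + 1)) := by
    intro j
    have hjk : j % k < k := Nat.mod_lt _ hkpos
    by_cases h : j % k + 1 < k
    · have h1 : (j + 1) % k = j % k + 1 := by
        rw [Nat.add_mod, Nat.mod_eq_of_lt (show (1:ℕ) < k by omega), Nat.mod_eq_of_lt h]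
      have := List.isChain_iff_getElem.mp hch (j % k) (by omega)
      simpa only [hg, List.get_eq_getElem, h1] using this
    · have hjk1 : j % k = k - 1 := by omega
      have h1 : (j + 1) % k = 0 := by
        rw [Nat.add_mod, Nat.mod_eq_of_lt (show (1:ℕ) < k by omega), hjk1,
          show k - 1 + 1 = k by omega, Nat.mod_self]
      apply hwrap
      · rw [List.getLast?_eq_getElem?, List.getElem?_eq_getElem (by omega)]
        simp only [hg, List.get_eq_getElem, hjk1]
        rfl
      · rw [List.head?_eq_getElem?, List.getElem?_eq_getElem (by omega)]
        simp only [hg, List.get_eq_getElem, h1]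
  -- Case A: some outside vertex can be inserted
  by_cases hcase : ∃ v, v ∉ c ∧ ∃ j, r (g j) v ∧ r v (g (j + 1))
  · obtain ⟨v, hv, j, hjv, hvj⟩ := hcase
    set f : ℕ → V := fun t => if t = k then v else g (j + 1 + t) with hf
    obtain ⟨hcyc, hlen⟩ := build_cycle r f (k + 1) (by omega)
      (by
        intro i hi i' hi' hfe
        simp only [hf] at hfe
        rcases eq_or_ne i k with rfl | hik <;> rcases eq_or_ne i' k with rfl | hik'
        · rfl
        · rw [if_pos rfl, if_neg hik'] at hfe; exact absurd (hfe ▸ hgmem _) hv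
        · rw [if_neg hik, if_pos rfl] at hfe; exact absurd (hfe.symm ▸ hgmem _) hv
        · rw [if_neg hik, if_neg hik'] at hfe
          have := hginj _ _ hfe
          have h2 : (j + 1 + i) % k = (j + 1 + i') % k := this
          have hi2 : i < k := by omega
          have hi2' : i' < k := by omega
          have : i % k = i' % k := Nat.ModEq.add_left_cancel' (j + 1) h2
          rwa [Nat.mod_eq_of_lt hi2, Nat.mod_eq_of_lt hi2'] at this)
      (by
        intro i hi
        simp only [hf]
        rcases eq_or_ne (i + 1) k with hik | hik
        · rw [if_pos hik, if_neg (by omega)]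
          have : j + 1 + i = j + k := by omega
          rw [this, hgper]
          exact hjv
        · rw [if_neg (by omega), if_neg hik]
          have : j + 1 + (i + 1) = (j + 1 + i) + 1 := by omega
          rw [this]
          exact hedge _)
      (by
        simp only [hf, Nat.add_sub_cancel, if_pos rfl, if_neg (by omega : (0:ℕ) ≠ k)]
        simpa using hvj)
    exact ⟨_, hcyc, by omega⟩
  · -- Case B
    push_neg at hcase
    have hsplit : ∀ u, u ∉ c → (∀ w ∈ c, r w u) ∨ (∀ w ∈ c, r u w) := by
      intro u hu
      by_contra hcon
      push_neg at hcon
      obtain ⟨⟨w1, hw1c, hw1⟩, ⟨w2, hw2c, hw2⟩⟩ := hcon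
      -- r u w1, r w2 u
      have hne1 : u ≠ w1 := fun h => hu (h ▸ hw1c)
      have hne2 : w2 ≠ u := fun h => hu (h ▸ hw2c)
      have huw1 : r u w1 := hchoose _ _ hne1 hw1
      have hw2u : r w2 u := hchoose _ _ hne2 hw2
      -- indices
      have hidx : ∀ w ∈ c, ∃ i, i < k ∧ g i = w := by
        intro w hw
        obtain ⟨n, hn⟩ := List.get_of_mem hw
        exact ⟨n, n.isLt, by simpa [hg, Nat.mod_eq_of_lt (show (n:ℕ) < k from n.isLt)] using hn⟩
      obtain ⟨i2, hi2k, hi2⟩ := hidx w2 hw2c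
      obtain ⟨i1, hi1k, hi1⟩ := hidx w1 hw1c
      -- P j := r (g j) u ; true at i2, false at i1 (shifted up)
      have hPtrue : r (g i2) u := hi2 ▸ hw2u
      have hPfalse : ¬ r (g (i1 + (i2 + 1) * k)) u := by
        rw [hgperq, hi1]; exact hw1
      have hle : i2 ≤ i1 + (i2 + 1) * k := by nlinarith
      obtain ⟨j, hPj, hPj1⟩ := lastTrue (fun j => r (g j) u) (i1 + (i2 + 1) * k - i2) i2
        hPtrue (by rwa [show i2 + (i1 + (i2 + 1) * k - i2) = i1 + (i2 + 1) * k by omega])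
      have hne3 : u ≠ g (j + 1) := fun h => hu (h ▸ hgmem _)
      exact hcase u hu j hPj (hchoose _ _ hne3 hPj1)
    -- A and B
    by_cases hab : ∃ a b, (a ∉ c ∧ ∀ w ∈ c, r w a) ∧ (b ∉ c ∧ ∀ w ∈ c, r b w) ∧ r a b
    · obtain ⟨a, b, ⟨hac, hA⟩, ⟨hbc, hB⟩, hrab⟩ := hab
      set f : ℕ → V := fun t => if t = 0 then a else if t = 1 then b else g t with hf
      obtain ⟨hcyc, hlen⟩ := build_cycle r f (k + 1) (by omega)
        (by
          intro i hi i' hi' hfe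
          simp only [hf] at hfe
          have hane : a ≠ b := fun h => hirr a (h ▸ hrab)
          rcases eq_or_ne i 0 with rfl | hi0 <;> rcases eq_or_ne i' 0 with rfl | hi0'
          · rfl
          · rw [if_pos rfl] at hfe
            rcases eq_or_ne i' 1 with rfl | hi1'
            · exact absurd (by simpa using hfe) hane
            · rw [if_neg hi0', if_neg hi1'] at hfe; exact absurd (hfe ▸ hgmem _) hac
          · rw [if_pos rfl] at hfe
            rcases eq_or_ne i 1 with rfl | hi1
            · exact absurd (by simpa using hfe.symm) hane
            · rw [if_neg hi0, if_neg hi1] at hfe; exact absurd (hfe.symm ▸ hgmem _) hac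
          · rcases eq_or_ne i 1 with rfl | hi1 <;> rcases eq_or_ne i' 1 with rfl | hi1'
            · rfl
            · rw [if_neg hi0, if_pos rfl, if_neg hi0', if_neg hi1'] at hfe
              exact absurd (hfe ▸ hgmem _) hbc
            · rw [if_neg hi0, if_neg hi1, if_neg hi0', if_pos rfl] at hfe
              exact absurd (hfe.symm ▸ hgmem _) hbc
            · rw [if_neg hi0, if_neg hi1, if_neg hi0', if_neg hi1'] at hfe
              have h2 := hginj _ _ hfe
              -- i, i' ∈ [2, k], residues distinct
              have hik : i ≤ k := by omega
              have hik' : i' ≤ k := by omega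
              rcases eq_or_ne i k with rfl | hik2 <;> rcases eq_or_ne i' k with rfl | hik2'
              · rfl
              · rw [Nat.mod_self, Nat.mod_eq_of_lt (by omega)] at h2; omega
              · rw [Nat.mod_self, Nat.mod_eq_of_lt (by omega)] at h2; omega
              · rw [Nat.mod_eq_of_lt (by omega), Nat.mod_eq_of_lt (by omega)] at h2
                exact h2)
        (by
          intro i hi
          simp only [hf]
          rcases eq_or_ne i 0 with rfl | hi0
          · simpa using hrab
          rcases eq_or_ne i 1 with rfl | hi1
          · simp only [if_neg (by omega : (1:ℕ) ≠ 0), if_pos rfl,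
              if_neg (by omega : (2:ℕ) ≠ 0), if_neg (by omega : (2:ℕ) ≠ 1)]
            exact hB _ (hgmem 2)
          · rw [if_neg hi0, if_neg hi1, if_neg (by omega), if_neg (by omega)]
            exact hedge i)
        (by
          have h0 : f 0 = a := by simp [hf]
          have hk' : f (k + 1 - 1) = g k := by
            simp only [hf, Nat.add_sub_cancel]
            rw [if_neg (by omega : k ≠ 0), if_neg (by omega : k ≠ 1)]
          rw [h0, hk']
          exact hA _ (hgmem k))
      exact ⟨_, hcyc, by omega⟩
    · -- no A→B edge: contradiction with strongness
      exfalso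
      push_neg at hab
      obtain ⟨v, hv⟩ := hout
      by_cases hBne : ∃ b, b ∉ c ∧ ∀ w ∈ c, r b w
      · obtain ⟨b0, hb0c, hb0⟩ := hBne
        set T : Set V := {x | x ∈ c ∨ (x ∉ c ∧ ∀ w ∈ c, r w x)} with hTdef
        have hclosed : ∀ x ∈ T, ∀ y, r x y → y ∈ T := by
          intro x hx y hxy
          by_contra hy
          simp only [hTdef, Set.mem_setOf_eq, not_or, not_and] at hy
          obtain ⟨hyc, hyA⟩ := hy
          have hyB : ∀ w ∈ c, r y w := (hsplit y hyc).resolve_left (hyA hyc)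
          rcases hx with hxc | ⟨hxc, hxA⟩
          · exact hasym _ _ hxy (hyB x hxc)
          · exact hab x y ⟨hxc, hxA⟩ ⟨hyc, hyB⟩ hxy
        have hb0T : b0 ∈ T := reach_closed hclosed (hS (g 0) b0) (Or.inl (hgmem 0))
        rcases hb0T with h | ⟨_, hA0⟩
        · exact hb0c h
        · exact hasym _ _ (hb0 _ (hgmem 0)) (hA0 _ (hgmem 0))
      · push_neg at hBne
        set T : Set V := {x | x ∉ c ∧ ∀ w ∈ c, r w x} with hTdef
        have hvT : v ∈ T := by
          refine ⟨hv, ?_⟩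
          rcases hsplit v hv with h | h
          · exact h
          · obtain ⟨w, hwc, hnw⟩ := hBne v hv
            exact absurd (h w hwc) hnw
        have hclosed : ∀ x ∈ T, ∀ y, r x y → y ∈ T := by
          intro x hx y hxy
          obtain ⟨hxc, hxA⟩ := hx
          by_cases hyc : y ∈ c
          · exact absurd (hxA y hyc) (hasym _ _ hxy)
          · refine ⟨hyc, ?_⟩
            rcases hsplit y hyc with h | h
            · exact h
            · obtain ⟨w, hwc, hnw⟩ := hBne y hyc
              exact absurd (h w hwc) hnw
        have := reach_closed hclosed (hS v (g 0)) hvT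
        exact this.1 (hgmem 0)

lemma exists_triangle [Fintype V] (r : V → V → Prop)
    (hT : IsTournament r) (hS : IsStrong r) (hn : 3 ≤ Fintype.card V) :
    ∃ c : List V, IsDiCycle r c ∧ c.length = 3 := by
  classical
  obtain ⟨hirr, htot⟩ := hT
  have hasym : ∀ x y : V, r x y → ¬ r y x := by
    intro x y hxy hyx
    by_cases h : x = y
    · exact hirr x (h ▸ hxy)
    · exact (htot x y h).mp hxy hyx
  have hchoose : ∀ x y : V, x ≠ y → ¬ r y x → r x y := fun x y h hn => (htot x y h).mpr hn
  have : Nonempty V := Fintype.card_pos_iff.mp (by omega)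
  obtain ⟨v⟩ := this
  obtain ⟨u, hu⟩ := Fintype.exists_ne_of_one_lt_card (by omega) v
  obtain h | ⟨b, _, hbv⟩ := (hS u v).cases_tail
  · exact absurd h.symm hu
  · by_contra hno
    push_neg at hno
    simp only [IsDiCycle, not_exists] at hno
    have hno' : ¬ ∃ a b' : V, r v a ∧ r a b' ∧ r b' v := by
      rintro ⟨a, b', hva, hab, hbv'⟩
      have hva' : v ≠ a := fun h => hirr v (h ▸ hva)
      have hab' : a ≠ b' := fun h => hirr a (h ▸ hab)
      have hbv2 : b' ≠ v := fun h => hirr b' (h ▸ hbv')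
      have hvb' : v ≠ b' := Ne.symm hbv2
      refine hno [v, a, b'] ⟨?_, by simp, ?_, ?_⟩ (by simp)
      · simp [hva', hab', hvb']
      · exact List.IsChain.cons_cons hva (List.IsChain.cons_cons hab (List.isChain_singleton _))
      · intro x y hx hy
        simp only [List.getLast?, List.head?, Option.some.injEq] at hx hy
        simp only [List.getLast] at hx
        subst hx; subst hy
        exact hbv'
    have hclosed : ∀ x ∈ {x : V | x = v ∨ r v x}, ∀ y, r x y → y ∈ {x : V | x = v ∨ r v x} := by
      intro x hx y hxy
      by_cases hyv : y = v
      · exact Or.inl hyv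
      by_contra hy
      simp only [Set.mem_setOf_eq, not_or] at hy
      rcases hx with rfl | hvx
      · exact hy.2 hxy
      · exact hno' ⟨x, y, hvx, hxy, hchoose y v hyv hy.2⟩
    have hbT : b ∈ {x : V | x = v ∨ r v x} :=
      reach_closed hclosed (hS v b) (Or.inl rfl)
    rcases hbT with rfl | hvb
    · exact hirr b hbv
    · exact hasym v b hvb hbv

theorem moon_pancyclic [Fintype V] (r : V → V → Prop)
    (hT : IsTournament r) (hS : IsStrong r) (hn : 3 ≤ Fintype.card V) :
    ∀ i : ℕ, 3 ≤ i → i ≤ Fintype.card V →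
      ∃ c : List V, IsDiCycle r c ∧ c.length = i := by
  intro i
  induction i with
  | zero => omega
  | succ n ih =>
    intro h3 hle
    rcases Nat.lt_or_ge n 3 with h | h
    · obtain ⟨c, hc, hl⟩ := exists_triangle r hT hS hn
      exact ⟨c, hc, by omega⟩
    · obtain ⟨c, hc, hl⟩ := ih h (by omega)
      obtain ⟨c', hc', hl'⟩ := extend_cycle r hT hS c hc (by omega)
      exact ⟨c', hc', by omega⟩
end

section
/- Every strong tournament on n ≥ 3 vertices has a Hamiltonian directed cycle. -/
variable {V : Type*}

section Helpers

variable {r : V → V → Prop}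

lemma reach_mem {S : Set V} (hcl : ∀ x ∈ S, ∀ y, r x y → y ∈ S)
    {x y : V} (hx : x ∈ S) (h : Relation.ReflTransGen r x y) : y ∈ S := by
  induction h with
  | refl => exact hx
  | tail _ h ih => exact hcl _ ih _ h

lemma IsTournament.asymm (hT : IsTournament r) {x y : V} (h : r x y) : ¬ r y x := by
  rcases eq_or_ne x y with rfl | hne
  · exact absurd h (hT.1 x)
  · exact fun h' => ((hT.2 x y hne).mp h) h'

lemma IsTournament.total (hT : IsTournament r) {x y : V} (hne : x ≠ y) : r x y ∨ r y x := by
  by_cases h : r y x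
  · exact Or.inr h
  · exact Or.inl ((hT.2 x y hne).mpr h)

lemma IsTournament.ne' (hT : IsTournament r) {x y : V} (h : r x y) : x ≠ y := by
  rintro rfl; exact hT.1 x h

lemma IsDiCycle.rotate_one {c : List V} (hc : IsDiCycle r c) : IsDiCycle r (c.rotate 1) := by
  obtain ⟨hnd, hlen, hch, hwrap⟩ := hc
  match c, hlen with
  | a :: b :: t, hlen =>
    have hrot : (a :: b :: t).rotate 1 = (b :: t) ++ [a] := by
      simp [List.rotate_cons_succ]
    have hab : r a b := (List.isChain_cons_cons.mp hch).1
    have hlast : ∀ x ∈ (b :: t).getLast?, r x a := by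
      intro x hx
      exact hwrap x a (by rw [List.getLast?_cons_cons]; exact hx) rfl
    rw [hrot]
    refine ⟨?_, ?_, ?_, ?_⟩
    · rw [← hrot]; exact List.nodup_rotate.mpr hnd
    · simp; simpa using hlen
    · refine List.isChain_append.mpr ?_
      exact ⟨(List.isChain_cons_cons.mp hch).2, List.isChain_singleton a,
        fun x hx y hy => by simp at hy; subst hy; exact hlast x hx⟩
    · intro x y hx hy
      rw [List.getLast?_concat] at hx
      simp at hy
      obtain rfl : a = x := by injection hx
      obtain rfl : b = y := hy
      exact hab

lemma IsDiCycle.rotate {c : List V} (hc : IsDiCycle r c) (n : ℕ) : IsDiCycle r (c.rotate n) := by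
  induction n with
  | zero => simpa using hc
  | succ n ih => rw [← List.rotate_rotate]; exact ih.rotate_one

lemma IsDiCycle.ne_nil {c : List V} (hc : IsDiCycle r c) : c ≠ [] := by
  intro h; subst h; simpa using hc.2.1

lemma rotate_succ_getLast? {c : List V} (h : c ≠ []) (n : ℕ) :
    (c.rotate (n + 1)).getLast? = (c.rotate n).head? := by
  rw [← List.rotate_rotate]
  obtain ⟨a, t, ht⟩ : ∃ a t, c.rotate n = a :: t := by
    rcases hr : c.rotate n with _ | ⟨a, t⟩
    · exact absurd (by simpa using congrArg List.length hr) (by simpa using h ∘ List.length_eq_zero_iff.mp)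
    · exact ⟨a, t, rfl⟩
  rw [ht]
  simp [List.rotate_cons_succ, List.getLast?_concat]

lemma head?_mem {c : List V} {a : V} (h : c.head? = some a) : a ∈ c := by
  cases c with
  | nil => simp at h
  | cons b t => simp at h; subst h; simp

lemma rotate_head?_exists {c : List V} (h : c ≠ []) (n : ℕ) :
    ∃ a, (c.rotate n).head? = some a := by
  rcases hr : c.rotate n with _ | ⟨a, t⟩
  · exact absurd (List.length_eq_zero_iff.mp (by simpa using congrArg List.length hr)) h
  · exact ⟨a, rfl⟩

lemma mem_head?_rotate {c : List V} {x : V} (hx : x ∈ c) :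
    ∃ n < c.length, (c.rotate n).head? = some x := by
  obtain ⟨n, hn, hget⟩ := List.mem_iff_getElem.mp hx
  exact ⟨n, hn, by rw [List.head?_rotate hn, List.getElem?_eq_getElem hn, hget]⟩

lemma dichotomy (hT : IsTournament r) {c : List V} (hc : IsDiCycle r c) {w : V} (hw : w ∉ c)
    (hni : ∀ n x y, (c.rotate n).getLast? = some x → (c.rotate n).head? = some y →
      ¬(r x w ∧ r w y)) :
    (∀ x ∈ c, r x w) ∨ (∀ x ∈ c, r w x) := by
  have hne := hc.ne_nil
  have step : ∀ n x y, (c.rotate n).head? = some x → (c.rotate (n + 1)).head? = some y →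
      r x w → r y w := by
    intro n x y hx hy hxw
    have h1 := hni (n + 1) x y (by rw [rotate_succ_getLast? hne]; exact hx) hy
    have hyc : y ∈ c := List.mem_rotate.mp (head?_mem hy)
    have hyw : y ≠ w := fun h => hw (h ▸ hyc)
    rcases hT.total hyw with h | h
    · exact h
    · exact absurd ⟨hxw, h⟩ h1
  have prop : ∀ d n x y, (c.rotate n).head? = some x → r x w →
      (c.rotate (n + d)).head? = some y → r y w := by
    intro d
    induction d with
    | zero =>
      intro n x y hx hxw hy
      rw [Nat.add_zero, hx] at hy
      injection hy with h
      exact h ▸ hxw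
    | succ d ih =>
      intro n x y hx hxw hy
      obtain ⟨z, hz⟩ := rotate_head?_exists hne (n + 1)
      have hzw := step n x z hx hz hxw
      have : n + (d + 1) = (n + 1) + d := by omega
      rw [this] at hy
      exact ih (n + 1) z y hz hzw hy
  obtain ⟨a, ha⟩ := rotate_head?_exists hne 0
  have ha0 : c.head? = some a := by simpa using ha
  have hac : a ∈ c := head?_mem ha0
  have haw : a ≠ w := fun h => hw (h ▸ hac)
  rcases hT.total haw with h | h
  · left
    intro x hx
    obtain ⟨n, hn, hxr⟩ := mem_head?_rotate hx
    exact prop n 0 a x ha h (by simpa using hxr)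
  · right
    intro x hx
    by_contra hnx
    have hxw : x ≠ w := fun hh => hw (hh ▸ hx)
    have hxw' : r x w := (hT.total hxw).resolve_right hnx
    obtain ⟨n, hn, hxr⟩ := mem_head?_rotate hx
    have haw' : r a w := by
      refine prop (c.length - n) n x a hxr hxw' ?_
      have : n + (c.length - n) = c.length := by omega
      rw [this, List.rotate_length]
      exact ha0
    exact hT.asymm h haw'

lemma insert_two (hT : IsTournament r) {c : List V} {w1 w2 : V}
    (hc : IsDiCycle r c) (hw1c : w1 ∉ c) (hw2c : w2 ∉ c)
    (hw1 : ∀ x ∈ c, r x w1) (hw2 : ∀ x ∈ c, r w2 x) (h12 : r w1 w2) :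
    ∃ c', IsDiCycle r c' ∧ c.length < c'.length := by
  obtain ⟨a, b, t, rfl⟩ : ∃ a b t, c = a :: b :: t := by
    match c, hc.2.1 with
    | a :: b :: t, _ => exact ⟨a, b, t, rfl⟩
  have hnd := hc.1
  rw [List.nodup_cons] at hnd
  have hch := List.isChain_cons_cons.mp hc.2.2.1
  refine ⟨a :: w1 :: w2 :: b :: t, ⟨?_, ?_, ?_, ?_⟩, by simp⟩
  · refine List.nodup_cons.mpr ⟨?_, List.nodup_cons.mpr ⟨?_, List.nodup_cons.mpr ⟨?_, hnd.2⟩⟩⟩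
    · simp only [List.mem_cons, not_or]
      refine ⟨fun h => hw1c (h ▸ (by simp : a ∈ a :: b :: t)),
        fun h => hw2c (h ▸ (by simp : a ∈ a :: b :: t)), ?_, ?_⟩
      · intro h; exact hnd.1 (by simp [h])
      · intro h; exact hnd.1 (by simp [h])
    · simp only [List.mem_cons, not_or]
      refine ⟨hT.ne' h12, ?_, ?_⟩
      · intro h; exact hw1c (by simp [h])
      · intro h; exact hw1c (by simp; exact Or.inr (Or.inr h))
    · simp only [List.mem_cons, not_or]
      refine ⟨?_, ?_⟩
      · intro h; exact hw2c (by simp [h])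
      · intro h; exact hw2c (by simp; exact Or.inr (Or.inr h))
  · simp
  · exact List.isChain_cons_cons.mpr ⟨hw1 a (by simp), List.isChain_cons_cons.mpr ⟨h12,
      List.isChain_cons_cons.mpr ⟨hw2 b (by simp), hch.2⟩⟩⟩
  · intro x y hx hy
    simp only [List.head?_cons] at hy
    rw [List.getLast?_cons_cons, List.getLast?_cons_cons, List.getLast?_cons_cons] at hx
    obtain rfl : a = y := by injection hy
    exact hc.2.2.2 x a (by rw [List.getLast?_cons_cons]; exact hx) rfl

lemma extend [Fintype V] (hT : IsTournament r) (hS : IsStrong r) {c : List V}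
    (hc : IsDiCycle r c) (hlt : c.length < Fintype.card V) :
    ∃ c', IsDiCycle r c' ∧ c.length < c'.length := by
  classical
  have hne := hc.ne_nil
  obtain ⟨a, ha0⟩ := rotate_head?_exists hne 0
  rw [List.rotate_zero] at ha0
  have hac : a ∈ c := head?_mem ha0
  have hout : ∃ w, w ∉ c := by
    by_contra h
    push_neg at h
    have h1 : c.toFinset = Finset.univ :=
      Finset.eq_univ_iff_forall.mpr (fun v => List.mem_toFinset.mpr (h v))
    have : Fintype.card V ≤ c.length := by
      calc Fintype.card V = c.toFinset.card := by rw [h1, Finset.card_univ]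
        _ ≤ c.length := List.toFinset_card_le c
    omega
  obtain ⟨w0, hw0⟩ := hout
  by_cases hins : ∃ w ∉ c, ∃ n x y, (c.rotate n).getLast? = some x ∧
      (c.rotate n).head? = some y ∧ r x w ∧ r w y
  · obtain ⟨w, hw, n, x, y, hx, hy, hxw, hwy⟩ := hins
    have hρ := hc.rotate n
    refine ⟨c.rotate n ++ [w], ⟨?_, ?_, ?_, ?_⟩, by simp⟩
    · rw [List.nodup_append]
      refine ⟨hρ.1, List.nodup_singleton w, fun z hz hz' => ?_⟩
      intro hb; simp at hb; subst hb
      exact fun h => hw (h ▸ (List.mem_rotate.mp hz))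
    · have h3 := hc.2.1
      simp
      omega
    · refine List.isChain_append.mpr ?_
      refine ⟨hρ.2.2.1, List.isChain_singleton w, fun x' hx' y' hy' => ?_⟩
      simp at hy'
      subst hy'
      rw [hx] at hx'
      obtain rfl : x = x' := by injection hx'
      exact hxw
    · intro x' y' hx' hy'
      rw [List.getLast?_concat] at hx'
      obtain rfl : w = x' := by injection hx'
      rw [List.head?_append_of_ne_nil _ hρ.ne_nil, hy] at hy'
      obtain rfl : y = y' := by injection hy'
      exact hwy
  · have hdi : ∀ w, w ∉ c → (∀ x ∈ c, r x w) ∨ (∀ x ∈ c, r w x) := by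
      intro w hw
      refine dichotomy hT hc hw ?_
      intro n x y hx hy hxy
      exact hins ⟨w, hw, n, x, y, hx, hy, hxy.1, hxy.2⟩
    -- in-type vertex exists
    have hB : ∃ w, w ∉ c ∧ ∀ x ∈ c, r x w := by
      by_contra hnB
      push_neg at hnB
      have closed : ∀ x ∈ {x : V | x ∈ c}, ∀ y, r x y → y ∈ {x : V | x ∈ c} := by
        intro x hx y hxy
        by_cases hy : y ∈ c
        · exact hy
        · rcases hdi y hy with h | h
          · obtain ⟨z, hz, hnz⟩ := hnB y hy
            exact absurd (h z hz) hnz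
          · exact absurd (h x hx) (hT.asymm hxy)
      exact hw0 (reach_mem closed hac (hS a w0))
    -- out-type vertex exists
    have hA : ∃ w, w ∉ c ∧ ∀ x ∈ c, r w x := by
      by_contra hnA
      push_neg at hnA
      have closed : ∀ x ∈ {x : V | x ∉ c}, ∀ y, r x y → y ∈ {x : V | x ∉ c} := by
        intro x hx y hxy hy
        rcases hdi x hx with h | h
        · exact hT.asymm (h y hy) hxy
        · obtain ⟨z, hz, hnz⟩ := hnA x hx
          exact hnz (h z hz)
      exact reach_mem closed hw0 (hS w0 a) hac
    obtain ⟨w2₀, hw2c₀, hw2₀⟩ := hA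
    -- an arc from an in-type to an out-type vertex
    have hArc : ∃ w1 w2, (w1 ∉ c ∧ ∀ x ∈ c, r x w1) ∧ (w2 ∉ c ∧ ∀ x ∈ c, r w2 x) ∧ r w1 w2 := by
      by_contra hnE
      have closed : ∀ x ∈ {x : V | x ∈ c ∨ (x ∉ c ∧ ∀ z ∈ c, r z x)},
          ∀ y, r x y → y ∈ {x : V | x ∈ c ∨ (x ∉ c ∧ ∀ z ∈ c, r z x)} := by
        intro x hx y hxy
        by_cases hyc : y ∈ c
        · exact Or.inl hyc
        · rcases hdi y hyc with h | h
          · exact Or.inr ⟨hyc, h⟩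
          · exfalso
            rcases hx with hx | ⟨hxc, hxin⟩
            · exact hT.asymm (h x hx) hxy
            · exact hnE ⟨x, y, ⟨hxc, hxin⟩, ⟨hyc, h⟩, hxy⟩
      have hw2S : w2₀ ∉ {x : V | x ∈ c ∨ (x ∉ c ∧ ∀ z ∈ c, r z x)} := by
        rintro (h | ⟨-, h⟩)
        · exact hw2c₀ h
        · exact hT.asymm (h a hac) (hw2₀ a hac)
      exact hw2S (reach_mem closed (Or.inl hac) (hS a w2₀))
    obtain ⟨w1, w2, ⟨hw1c, hw1⟩, ⟨hw2c, hw2⟩, h12⟩ := hArc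
    obtain ⟨c', hc', hl⟩ := insert_two hT hc hw1c hw2c hw1 hw2 h12
    exact ⟨c', hc', hl⟩

lemma exists_dicycle [Fintype V] (hT : IsTournament r) (hS : IsStrong r)
    (hn : 3 ≤ Fintype.card V) : ∃ c, IsDiCycle r c := by
  obtain ⟨p₀, q₀, hne⟩ := Fintype.exists_pair_of_one_lt_card (show 1 < Fintype.card V by omega)
  obtain ⟨p, q, hpq⟩ : ∃ p q, r p q := by
    rcases hT.total hne with h | h
    exacts [⟨_, _, h⟩, ⟨_, _, h⟩]
  have hqp : q ≠ p := (hT.ne' hpq).symm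
  have hB : ∃ u, r u p := by
    by_contra h
    push_neg at h
    have closed : ∀ x ∈ {x : V | x ≠ p}, ∀ y, r x y → y ∈ {x : V | x ≠ p} := by
      intro x hx y hxy hyp
      exact h x (hyp ▸ hxy)
    exact (reach_mem closed hqp (hS q p)) rfl
  obtain ⟨b0, hb0⟩ := hB
  have hTri : ∃ u v, r p u ∧ r u v ∧ r v p := by
    by_contra htri
    have closed : ∀ x ∈ {x : V | r p x}, ∀ y, r x y → y ∈ {x : V | r p x} := by
      intro x hx y hxy
      by_cases hyp : y = p
      · exact absurd hx (hT.asymm (hyp ▸ hxy))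
      · by_cases hp : r p y
        · exact hp
        · exact absurd ⟨x, y, hx, hxy, (hT.total hyp).resolve_right hp⟩ htri
    have hb0S : b0 ∉ {x : V | r p x} := fun h => hT.asymm h hb0
    exact hb0S (reach_mem closed hpq (hS q b0))
  obtain ⟨u, v, hpu, huv, hvp⟩ := hTri
  refine ⟨[p, u, v], ?_, ?_, ?_, ?_⟩
  · simp only [List.nodup_cons, List.mem_cons, not_or, List.not_mem_nil, not_false_iff,
      and_true, List.nodup_nil]
    exact ⟨⟨hT.ne' hpu, fun h => hT.ne' hvp h.symm⟩, hT.ne' huv⟩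
  · simp
  · exact List.isChain_cons_cons.mpr ⟨hpu, List.isChain_cons_cons.mpr ⟨huv, List.isChain_singleton v⟩⟩
  · intro x y hx hy
    simp only [List.head?_cons] at hy
    have : [p, u, v].getLast? = some v := rfl
    rw [this] at hx
    obtain rfl : v = x := by injection hx
    obtain rfl : p = y := by injection hy
    exact hvp

end Helpers

theorem strong_tournament_hamiltonian_cycle [Fintype V] (r : V → V → Prop)
    (hT : IsTournament r) (hS : IsStrong r) (hn : 3 ≤ Fintype.card V) :
    ∃ c : List V, IsDiCycle r c ∧ c.length = Fintype.card V ∧ ∀ v : V, v ∈ c := by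
  classical
  obtain ⟨c0, hc0⟩ := exists_dicycle hT hS hn
  have grow : ∀ m, ∀ c : List V, IsDiCycle r c → Fintype.card V - c.length ≤ m →
      ∃ c', IsDiCycle r c' ∧ c'.length = Fintype.card V := by
    intro m
    induction m with
    | zero =>
      intro c hc h
      exact ⟨c, hc, by have := hc.1.length_le_card; omega⟩
    | succ m ih =>
      intro c hc h
      rcases eq_or_lt_of_le hc.1.length_le_card with heq | hlt
      · exact ⟨c, hc, heq⟩
      · obtain ⟨c', hc', hl⟩ := extend hT hS hc hlt
        exact ih c' hc' (by omega)
  obtain ⟨c, hc, hlen⟩ := grow (Fintype.card V) c0 hc0 (by omega)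
  refine ⟨c, hc, hlen, fun v => ?_⟩
  have h1 : c.toFinset.card = Fintype.card V := by
    rw [List.toFinset_card_of_nodup hc.1, hlen]
  have := Finset.eq_univ_of_card _ h1
  have : v ∈ c.toFinset := by rw [this]; exact Finset.mem_univ v
  exact List.mem_toFinset.mp this
end

section
/- Let T be a strong tournament, k a vertex with nonempty out-neighborhood A = N^+(k) and in-neighborhood B = N^-(k), and let A_1,...,A_r be the strong components of the subtournament on A ordered so that all edges between A_i and A_j with i < j go from A_i to A_j. Then there exist a* in A_r and b* in B such that (a*, b*) is an edge of T. -/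
variable {V : Type*}

theorem edge_from_last_component_to_B (r : V → V → Prop) (k : V)
    (hT : IsTournament r) (hS : IsStrong r) (hK : IsKing r k)
    (hB : ∃ b, r b k)
    (m : ℕ) (A : Fin (m + 1) → Set V)
    (hne : ∀ i, (A i).Nonempty)
    (hpart : ∀ v, r k v → ∃! i, v ∈ A i)
    (hsub : ∀ i, ∀ v ∈ A i, r k v)
    (hstrong : ∀ i, IsStrongOn r (A i))
    (hforward : ∀ i j : Fin (m + 1), i < j → ∀ a ∈ A i, ∀ b ∈ A j, r a b) :
    ∃ a ∈ A (Fin.last m), ∃ b, r b k ∧ r a b := by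
  by_contra h
  push_neg at h
  -- h : ∀ a ∈ A (Fin.last m), ∀ b, r b k → ¬ r a b
  obtain ⟨a, ha⟩ := hne (Fin.last m)
  have key : ∀ v, Relation.ReflTransGen r a v → v ∈ A (Fin.last m) := by
    intro v hv
    induction hv with
    | refl => exact ha
    | tail _ hbc ih =>
      rename_i b c _
      have hkb : r k b := hsub _ b ih
      have hbk : b ≠ k := fun e => hT.1 k (e ▸ hkb)
      have hck : c ≠ k := by
        intro e
        exact ((hT.2 b k hbk).mp (e ▸ hbc)) hkb
      by_cases hck' : r c k
      · exact absurd hbc (h b ih c hck')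
      · have hkc : r k c := (hT.2 k c (Ne.symm hck)).mpr hck'
        obtain ⟨i, hci, -⟩ := hpart c hkc
        rcases lt_or_eq_of_le (Fin.le_last i) with hlt | heq
        · have := hforward i (Fin.last m) hlt c hci b ih
          have hbc' : b ≠ c := fun e => hT.1 b (e ▸ hbc)
          exact absurd this ((hT.2 b c hbc').mp hbc)
        · exact heq ▸ hci
  have hk := key k (hS a k)
  exact hT.1 k (hsub _ k hk)
end

section
/- Let T be a strong tournament on n vertices, k a king of T, and A = N^+(k). If C is a directed cycle in T whose vertex set contains A ∪ {k} and has fewer than n vertices, then there is a directed cycle C' of length |C|+1 obtained from C by inserting one new vertex z ∈ N^-(k) between two consecutive vertices of C, and V(C') ⊇ A ∪ {k}. -/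
variable {V : Type*}

lemma insert_aux (r : V → V → Prop) (l1 l2 : List V) (z : V)
    (hc : IsDiCycle r (l1 ++ l2)) (hz : z ∉ l1 ++ l2) (h1 : l1 ≠ [])
    (hx : ∀ x, l1.getLast? = some x → r x z)
    (hy : ∀ y, (l2 ++ l1).head? = some y → r z y) :
    IsDiCycle r (l1 ++ z :: l2) := by
  obtain ⟨hnd, hlen, hch, hwrap⟩ := hc
  have hnd' : (l1 ++ z :: l2).Nodup := by
    rw [List.nodup_middle, List.nodup_cons]; exact ⟨hz, hnd⟩
  have hlen' : 3 ≤ (l1 ++ z :: l2).length := by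
    simp only [List.length_append, List.length_cons] at hlen ⊢; omega
  rw [show List.Chain' r (l1 ++ l2) ↔ _ from List.isChain_append] at hch
  obtain ⟨hch1, hch2, hch12⟩ := hch
  refine ⟨hnd', hlen', ?_, ?_⟩
  · rw [show List.Chain' r (l1 ++ z :: l2) ↔ _ from List.isChain_append]
    refine ⟨hch1, ?_, ?_⟩
    · rw [List.isChain_cons]
      refine ⟨?_, hch2⟩
      intro y hyy
      apply hy
      cases l2 with
      | nil => simp at hyy
      | cons a t => simpa using hyy
    · intro x hx' y hy'
      simp only [List.head?_cons, Option.mem_def, Option.some.injEq] at hy'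
      subst hy'
      exact hx x hx'
  · intro x y hlast hhead
    rw [List.head?_append_of_ne_nil _ h1] at hhead
    rw [List.getLast?_append_of_ne_nil _ (by simp : (z :: l2) ≠ [])] at hlast
    cases l2 with
    | nil =>
      simp only [List.getLast?_singleton, Option.some.injEq] at hlast
      subst hlast
      apply hy
      simpa [List.head?_append_of_ne_nil _ h1] using hhead
    | cons a t =>
      apply hwrap x y
      · rw [List.getLast?_append_of_ne_nil _ (by simp : (a :: t) ≠ [])]
        rw [show (z :: a :: t).getLast? = (a :: t).getLast? from
          (List.getLast?_cons_cons ..)] at hlast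
        exact hlast
      · rw [List.head?_append_of_ne_nil _ h1]
        exact hhead

theorem extend_cycle_containing_out_neighborhood [Fintype V] (r : V → V → Prop) (k : V)
    (hT : IsTournament r) (hS : IsStrong r) (hK : IsKing r k)
    (c : List V) (hc : IsDiCycle r c)
    (hkc : k ∈ c) (hAc : ∀ v, r k v → v ∈ c)
    (hlt : c.length < Fintype.card V) :
    ∃ (z : V) (l1 l2 : List V), z ∉ c ∧ r z k ∧ c = l1 ++ l2 ∧
      IsDiCycle r (l1 ++ z :: l2) := by
  classical
  obtain ⟨hnd, hlen, hch, hwrap⟩ := hc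
  -- find a vertex z outside c
  obtain ⟨z, hz⟩ : ∃ z, z ∉ c := by
    by_contra h
    push_neg at h
    have : c.toFinset = Finset.univ := Finset.eq_univ_iff_forall.2 (by simpa using h)
    have := congrArg Finset.card this
    rw [List.toFinset_card_of_nodup hnd, Finset.card_univ] at this
    omega
  have hzk : z ≠ k := fun h => hz (h ▸ hkc)
  have hne : ∀ v ∈ c, v ≠ z := fun v hv h => hz (h ▸ hv)
  have hbeats : ∀ v ∈ c, ¬ r v z → r z v := fun v hv h =>
    ((hT.2 z v (fun he => hne v hv he.symm)).2 h)
  have hnkz : ¬ r k z := fun h => hz (hAc z h)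
  have hrzk : r z k := hbeats k hkc hnkz
  -- there is u ∈ c with r u z
  obtain ⟨u, hu, huz⟩ : ∃ u ∈ c, r u z := by
    rcases hK z hzk with h | ⟨u, hku, huz⟩
    · exact absurd h hnkz
    · exact ⟨u, hAc u hku, huz⟩
  refine ⟨z, ?_⟩
  set P : V → Bool := fun v => decide (r v z) with hP
  have hc' : IsDiCycle r c := ⟨hnd, hlen, hch, hwrap⟩
  have hcne : c ≠ [] := by intro h; rw [h] at hlen; simp at hlen
  by_cases hhd : r (c.head hcne) z
  · -- split using takeWhile/dropWhile from the front
    refine ⟨c.takeWhile P, c.dropWhile P, hz, hrzk,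
      (List.takeWhile_append_dropWhile ..).symm, ?_⟩
    have hsplit : c.takeWhile P ++ c.dropWhile P = c := List.takeWhile_append_dropWhile ..
    have h1 : c.takeWhile P ≠ [] := by
      intro h
      rw [List.takeWhile_eq_nil_iff] at h
      have h0 : 0 < c.length := List.length_pos_iff.2 hcne
      have := h h0
      rw [List.get_mk_zero] at this
      simp only [hP, decide_eq_true_eq] at this
      exact this hhd
    have h2 : c.dropWhile P ≠ [] := by
      intro h
      rw [List.dropWhile_eq_nil_iff] at h
      have := h k hkc
      simp only [hP, decide_eq_true_eq] at this
      exact hz (hAc z this)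
    apply insert_aux r _ _ z (hsplit.symm ▸ hc') (hsplit.symm ▸ hz) h1
    · intro x hx'
      have hxmem : x ∈ c.takeWhile P := by
        have := List.getLast?_eq_some_iff.1 hx'
        obtain ⟨l', hl'⟩ := this
        rw [hl']; simp
      have := List.mem_takeWhile_imp hxmem
      simpa [hP] using this
    · intro y hy'
      rw [List.head?_append_of_ne_nil _ h2] at hy'
      have hyd : (c.dropWhile P).head h2 = y := by
        rw [List.head_eq_iff_head?_eq_some]; exact hy'
      have hnp := List.head_dropWhile_not P h2
      rw [hyd] at hnp
      have hymem : y ∈ c := by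
        have h' : y ∈ c.dropWhile P := hyd ▸ List.head_mem h2
        exact ((List.dropWhile_suffix P).sublist).subset h'
      exact hbeats y hymem (fun hr => by simp [hP, hr] at hnp)
  · -- split from the back: rdropWhile/rtakeWhile with ¬P
    set Q : V → Bool := fun v => decide (¬ r v z) with hQ
    have hsplit : c.rdropWhile Q ++ c.rtakeWhile Q = c := by
      simp [List.rdropWhile, List.rtakeWhile, ← List.reverse_append]
    refine ⟨c.rdropWhile Q, c.rtakeWhile Q, hz, hrzk, hsplit.symm, ?_⟩
    have h1 : c.rdropWhile Q ≠ [] := by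
      intro h
      rw [List.rdropWhile_eq_nil_iff] at h
      have := h u hu
      simp only [hQ, decide_eq_true_eq] at this
      exact this huz
    apply insert_aux r _ _ z (hsplit.symm ▸ hc') (hsplit.symm ▸ hz) h1
    · intro x hx'
      have hxl : (c.rdropWhile Q).getLast h1 = x := by
        rw [List.getLast_eq_iff_getLast?_eq_some]; exact hx'
      have := List.rdropWhile_last_not Q c h1
      rw [hxl] at this
      simp only [hQ, decide_eq_true_eq, not_not] at this
      exact this
    · intro y hy'
      by_cases h2 : c.rtakeWhile Q = []
      · have hdc : c.rdropWhile Q = c := by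
          have h' := hsplit
          rwa [h2, List.append_nil] at h'
        rw [h2, List.nil_append, hdc, List.head?_eq_head hcne] at hy'
        cases hy'
        exact hbeats _ (List.head_mem hcne) hhd
      · rw [List.head?_append_of_ne_nil _ h2] at hy'
        have hyd : (c.rtakeWhile Q).head h2 = y := by
          rw [List.head_eq_iff_head?_eq_some]; exact hy'
        have hymem' : y ∈ c.rtakeWhile Q := hyd ▸ List.head_mem h2
        have := List.mem_rtakeWhile_imp hymem'
        simp only [hQ, decide_eq_true_eq] at this
        have hymem : y ∈ c := (List.rtakeWhile_suffix Q c).mem hymem'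
        exact hbeats y hymem this
end

section
/- Main theorem: Given a strong tournament T on n ≥ 3 vertices and any king k of T, there exists a sequence of directed cycles C_3, C_4, ..., C_n, where C_i has length i, such that k lies on every C_i and k is a king of the subtournament induced by the vertex set of each C_i. -/
variable {V : Type*}

namespace KingCycleAux

/-- A good cycle: a directed cycle with head `k` on whose vertex set `k` is a king. -/
def GoodC (r : V → V → Prop) (k : V) (l : List V) : Prop :=
  l.head? = some k ∧ IsDiCycle r l ∧ IsKingOn r {v | v ∈ l} k

variable {r : V → V → Prop} {k : V}

lemma tne (hT : IsTournament r) {x y : V} (h : r x y) : x ≠ y := by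
  rintro rfl; exact hT.1 x h

lemma tnot (hT : IsTournament r) {x y : V} (h : r x y) : ¬ r y x := by
  rcases eq_or_ne x y with rfl | hne
  · exact absurd h (hT.1 x)
  · exact fun h' => ((hT.2 y x hne.symm).mp h') h

lemma tflip (hT : IsTournament r) {x y : V} (hxy : x ≠ y) (h : ¬ r x y) : r y x := by
  by_contra h'
  exact h ((hT.2 x y hxy).mpr h')

/-- First element of a list satisfying `P`. -/
lemma exists_first {P : V → Prop} :
    ∀ (l : List V), (∃ x ∈ l, P x) →
      ∃ l₁ x l₂, l = l₁ ++ x :: l₂ ∧ P x ∧ ∀ y ∈ l₁, ¬ P y := by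
  intro l
  induction l with
  | nil => rintro ⟨x, hx, -⟩; simp at hx
  | cons a t ih =>
    intro h
    by_cases ha : P a
    · exact ⟨[], a, t, by simp, ha, by simp⟩
    · obtain ⟨x, hx, hPx⟩ := h
      rcases List.mem_cons.mp hx with rfl | hx'
      · exact absurd hPx ha
      · obtain ⟨l₁, x, l₂, rfl, hPx, hall⟩ := ih ⟨x, hx', hPx⟩
        refine ⟨a :: l₁, x, l₂, by simp, hPx, ?_⟩
        intro y hy
        rcases List.mem_cons.mp hy with rfl | hy'
        · exact ha
        · exact hall y hy'

/-- Last element of a list satisfying `P`. -/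
lemma exists_last {P : V → Prop} :
    ∀ (l : List V), (∃ x ∈ l, P x) →
      ∃ l₁ x l₂, l = l₁ ++ x :: l₂ ∧ P x ∧ ∀ y ∈ l₂, ¬ P y := by
  intro l
  induction l with
  | nil => rintro ⟨x, hx, -⟩; simp at hx
  | cons a t ih =>
    intro h
    by_cases ht : ∃ x ∈ t, P x
    · obtain ⟨l₁, x, l₂, rfl, hPx, hall⟩ := ih ht
      exact ⟨a :: l₁, x, l₂, by simp, hPx, hall⟩
    · push_neg at ht
      have ha : P a := by
        obtain ⟨x, hx, hPx⟩ := h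
        rcases List.mem_cons.mp hx with rfl | hx'
        · exact hPx
        · exact absurd hPx (ht x hx')
      exact ⟨[], a, t, by simp, ha, ht⟩

/-- Crossing lemma: a path from outside `P` to inside `P` crosses the boundary. -/
lemma cross {P : V → Prop} {a b : V} (h : Relation.ReflTransGen r a b)
    (ha : ¬ P a) (hb : P b) : ∃ p q, ¬ P p ∧ P q ∧ r p q := by
  induction h with
  | refl => exact absurd hb ha
  | @tail c d h1 h2 ih =>
    by_cases hc : P c
    · exact ih hc
    · exact ⟨c, d, hc, hb, h2⟩

lemma head?_append_cons (m1 : List V) (y : V) (A B : List V) :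
    (m1 ++ y :: A).head? = (m1 ++ y :: B).head? := by
  cases m1 <;> simp

/-- Assemble a `GoodC` from components. -/
lemma goodc_mk {l : List V} (h1 : l.head? = some k) (h2 : l.Nodup)
    (h3 : 3 ≤ l.length) (h4 : l.Chain' r)
    (h5 : ∀ x, l.getLast? = some x → r x k)
    (h6 : ∀ v ∈ l, v ≠ k → r k v ∨ ∃ u ∈ l, r k u ∧ r u v) : GoodC r k l := by
  refine ⟨h1, ⟨h2, h3, h4, ?_⟩, ?_, ?_⟩
  · intro x y hx hy
    rw [h1] at hy
    cases hy
    exact h5 x hx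
  · exact List.mem_of_mem_head? (by rw [h1]; exact rfl)
  · intro v hv hvk
    obtain (h | ⟨u, hu, h⟩) := h6 v hv hvk
    · exact Or.inl h
    · exact Or.inr ⟨u, hu, h⟩

/-- Replace `y` in the cycle `k :: t₁ ++ y :: t₂` with two new vertices `α, β`. -/
lemma surgery (hT : IsTournament r) {t t₁ t₂ : List V} {y α β : V}
    (hnd : (k :: t).Nodup) (hlen3 : 3 ≤ (k :: t).length) (hch : (k :: t).Chain' r)
    (hlast : ∀ x, (k :: t).getLast? = some x → r x k)
    (hking : ∀ v ∈ k :: t, v ≠ k → r k v ∨ ∃ u ∈ k :: t, r k u ∧ r u v)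
    (hts : t = t₁ ++ y :: t₂)
    (hαl : α ∉ k :: t) (hβl : β ∉ k :: t) (hαβne : α ≠ β)
    (hαdom : ∀ x ∈ k :: t, r x α) (hkα : r k α) (hαβ : r α β)
    (hβ : ∀ z ∈ t₂, r β z) (hβk : r β k)
    (hdrop : r y k ∨ ∀ z ∈ t, r k z) :
    ∃ l', GoodC r k l' ∧ l'.length = (k :: t).length + 1 := by
  subst hts
  have hsplit : (k :: (t₁ ++ y :: t₂) : List V) = (k :: t₁) ++ (y :: t₂) := by simp
  refine ⟨(k :: t₁) ++ (α :: β :: t₂), ?_, by simp; omega⟩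
  have hmemnew : ∀ u ∈ (k :: (t₁ ++ y :: t₂) : List V), u ≠ y →
      u ∈ (k :: t₁) ++ (α :: β :: t₂) := by
    intro u hu huy
    simp at hu ⊢
    tauto
  have hchold := List.isChain_append.mp (hsplit ▸ hch)
  refine goodc_mk ?_ ?_ ?_ ?_ ?_ ?_
  · simp
  · have h1 : (k :: t₁) ++ (α :: β :: t₂) = ((k :: t₁) ++ [α]) ++ β :: t₂ := by simp
    rw [h1, List.nodup_middle, List.nodup_cons]
    have h2 : ((k :: t₁) ++ [α]) ++ t₂ = (k :: t₁) ++ α :: t₂ := by simp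
    rw [h2, List.nodup_middle, List.nodup_cons]
    simp only [List.mem_append, List.mem_cons] at hαl hβl ⊢
    push_neg at hαl hβl ⊢
    have hndo : ((k :: t₁) ++ t₂).Nodup := by
      exact (hsplit ▸ hnd).sublist
        (List.Sublist.append_left (List.sublist_cons_self y t₂) (k :: t₁))
    refine ⟨?_, ?_, hndo⟩ <;> tauto
  · simp at hlen3 ⊢; omega
  · unfold List.Chain'
    rw [List.isChain_append]
    refine ⟨hchold.1, ?_, ?_⟩
    · rw [List.isChain_cons_cons]
      refine ⟨hαβ, ?_⟩
      rw [List.isChain_cons]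
      exact ⟨fun z hz => hβ z (List.mem_of_mem_head? hz), (List.isChain_cons.mp hchold.2.1).2⟩
    · intro x hx z hz
      simp at hz
      subst hz
      apply hαdom
      have : x ∈ k :: t₁ := List.mem_of_getLast? hx
      simp at this ⊢
      tauto
  · intro x hx
    cases t₂ with
    | nil =>
      rw [List.getLast?_append_cons] at hx
      simp at hx
      subst hx
      exact hβk
    | cons c t₂' =>
      apply hlast
      rw [List.getLast?_append_cons, List.getLast?_cons_cons, List.getLast?_cons_cons] at hx
      rw [hsplit, List.getLast?_append_cons, List.getLast?_cons_cons]
      exact hx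
  · intro w hw hwk
    have hwc : w = α ∨ w = β ∨ w ∈ (k :: (t₁ ++ y :: t₂) : List V) := by
      simp at hw ⊢
      tauto
    have hαnew : α ∈ (k :: t₁) ++ (α :: β :: t₂) := by simp
    rcases hwc with rfl | rfl | hwl
    · exact Or.inl hkα
    · exact Or.inr ⟨α, hαnew, hkα, hαβ⟩
    · rcases hdrop with hyk | hallA
      · rcases hking w hwl hwk with h | ⟨u, hu, h1, h2⟩
        · exact Or.inl h
        · have huy : u ≠ y := by rintro rfl; exact tnot hT h1 hyk
          exact Or.inr ⟨u, hmemnew u hu huy, h1, h2⟩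
      · refine Or.inl (hallA w ?_)
        rcases List.mem_cons.mp hwl with rfl | h
        · exact absurd rfl hwk
        · exact h


/-- The key growth lemma: any good cycle that does not span `V` can be extended. -/
lemma grow [Fintype V] (hT : IsTournament r) (hS : IsStrong r) (hK : IsKing r k)
    {l : List V} (hl : GoodC r k l) (hlen : l.length < Fintype.card V) :
    ∃ l', GoodC r k l' ∧ l'.length = l.length + 1 := by
  classical
  obtain ⟨hhead, ⟨hnd, hlen3, hch, hcyc⟩, -, hking⟩ := hl
  have hlast : ∀ x, l.getLast? = some x → r x k := fun x hx => hcyc x k hx hhead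
  have hking' : ∀ v ∈ l, v ≠ k → r k v ∨ ∃ u ∈ l, r k u ∧ r u v := by
    intro v hv hvk
    obtain (h | ⟨u, hu, h⟩) := hking v hv hvk
    · exact Or.inl h
    · exact Or.inr ⟨u, hu, h⟩
  have hkl : k ∈ l := List.mem_of_mem_head? (by rw [hhead]; exact rfl)
  have hout : ∃ v, v ∉ l := by
    by_contra h
    push_neg at h
    have hsub : (Finset.univ : Finset V) ⊆ l.toFinset := fun v _ => List.mem_toFinset.mpr (h v)
    have := Finset.card_le_card hsub
    rw [List.toFinset_card_of_nodup hnd] at this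
    simp [Finset.card_univ] at this
    omega
  have hne_of_not_mem : ∀ {v x : V}, v ∉ l → x ∈ l → v ≠ x := by
    rintro v x hv hx rfl; exact hv hx
  -- MOVE 1 : insertion of a vertex with an in- and out-neighbour and the king condition
  by_cases hm1 : ∃ v, v ∉ l ∧ (∃ x ∈ l, r x v) ∧ (∃ y ∈ l, r v y) ∧
      (r k v ∨ ∃ u ∈ l, r k u ∧ r u v)
  · obtain ⟨v, hvl, hin, hout', hkc⟩ := hm1
    have key : ∃ l₁ x l₂, l = l₁ ++ x :: l₂ ∧ r x v ∧
        ((l₂ = [] ∧ r v k) ∨ ∃ z l₂', l₂ = z :: l₂' ∧ r v z) := by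
      obtain ⟨m1, x, m2, hsplit, hvx, hall⟩ := exists_first (P := fun x => r v x) l hout'
      by_cases hm1e : m1 = []
      · subst hm1e
        have hxk : x = k := by
          rw [hsplit] at hhead; simpa using hhead
        subst hxk
        obtain ⟨n1, y, n2, hsplit2, hyv, hall2⟩ := exists_last (P := fun z => r z v) l hin
        refine ⟨n1, y, n2, hsplit2, hyv, ?_⟩
        cases n2 with
        | nil => exact Or.inl ⟨rfl, hvx⟩
        | cons z n2' =>
          refine Or.inr ⟨z, n2', rfl, ?_⟩
          have hz : z ∈ l := by rw [hsplit2]; simp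
          exact tflip hT (hne_of_not_mem hvl hz).symm (hall2 z (by simp))
      · obtain ⟨m1', c, rfl⟩ : ∃ m1' c, m1 = m1' ++ [c] := by
          rcases List.eq_nil_or_concat m1 with h | ⟨m1', c, h⟩
          · exact absurd h hm1e
          · exact ⟨m1', c, by rw [h, List.concat_eq_append]⟩
        have hcv : r c v := by
          have hc : c ∈ l := by rw [hsplit]; simp
          exact tflip hT (hne_of_not_mem hvl hc) (hall c (by simp))
        exact ⟨m1', c, x :: m2, by simpa using hsplit, hcv, Or.inr ⟨x, m2, rfl, hvx⟩⟩
    obtain ⟨l₁, x, l₂, hsplit, hxv, hrest⟩ := key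
    refine ⟨l₁ ++ x :: v :: l₂, ?_, by rw [hsplit]; simp; omega⟩
    have hmem : ∀ w, w ∈ l₁ ++ x :: v :: l₂ ↔ w = v ∨ w ∈ l := by
      intro w; rw [hsplit]; simp; tauto
    refine goodc_mk ?_ ?_ ?_ ?_ ?_ ?_
    · rw [← hhead, hsplit]; exact head?_append_cons l₁ x (v :: l₂) l₂
    · have he : (l₁ ++ x :: v :: l₂) = (l₁ ++ [x]) ++ v :: l₂ := by simp
      rw [he, List.nodup_middle]
      have he2 : (l₁ ++ [x]) ++ l₂ = l₁ ++ x :: l₂ := by simp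
      rw [he2]
      rw [hsplit] at hnd hvl
      exact List.nodup_cons.mpr ⟨hvl, hnd⟩
    · rw [hsplit] at hlen3; simp at hlen3 ⊢; omega
    · rw [hsplit] at hch
      unfold List.Chain' at hch ⊢
      rw [List.isChain_append] at hch ⊢
      obtain ⟨hc1, hc2, hc3⟩ := hch
      refine ⟨hc1, ?_, ?_⟩
      · rw [List.isChain_cons_cons]
        refine ⟨hxv, ?_⟩
        rw [List.isChain_cons] at hc2 ⊢
        refine ⟨?_, hc2.2⟩
        intro z hz
        rcases hrest with ⟨rfl, -⟩ | ⟨z', l₂', rfl, hvz⟩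
        · simp at hz
        · simp at hz; subst hz; exact hvz
      · intro a ha b hb
        simp at hb
        subst hb
        exact hc3 a ha x (by simp)
    · intro w hw
      rcases hrest with ⟨rfl, hvk⟩ | ⟨z', l₂', rfl, -⟩
      · rw [List.getLast?_append_cons] at hw
        simp at hw; subst hw; exact hvk
      · apply hlast
        rw [hsplit, List.getLast?_append_cons, List.getLast?_cons_cons]
        rw [List.getLast?_append_cons, List.getLast?_cons_cons, List.getLast?_cons_cons] at hw
        exact hw
    · intro w hw hwk
      rcases (hmem w).mp hw with rfl | hwl
      · rcases hkc with h | ⟨u, hu, h1, h2⟩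
        · exact Or.inl h
        · exact Or.inr ⟨u, (hmem u).mpr (Or.inr hu), h1, h2⟩
      · rcases hking' w hwl hwk with h | ⟨u, hu, h1, h2⟩
        · exact Or.inl h
        · exact Or.inr ⟨u, (hmem u).mpr (Or.inr hu), h1, h2⟩
  -- no MOVE 1 available
  push_neg at hm1
  obtain ⟨t, rfl⟩ : ∃ t, l = k :: t := by
    cases l with
    | nil => simp at hhead
    | cons a t =>
      simp at hhead
      exact ⟨t, by rw [hhead]⟩
  by_cases hM : ∃ v, v ∉ k :: t ∧ (∃ x ∈ k :: t, r x v) ∧ (∃ y ∈ k :: t, r v y)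
  · -- MOVE 3
    obtain ⟨v, hvl, hin, hout'⟩ := hM
    have hkc := hm1 v hvl hin hout'
    obtain ⟨hnkv, hnohelper⟩ := hkc
    have hvk : v ≠ k := hne_of_not_mem hvl hkl
    have hvbeatsk : r v k := tflip hT (Ne.symm hvk) hnkv
    obtain ⟨a, hka, hav⟩ : ∃ a, r k a ∧ r a v := by
      rcases hK v hvk with h | ⟨u, h1, h2⟩
      · exact absurd h hnkv
      · exact ⟨u, h1, h2⟩
    have hal : a ∉ k :: t := fun h => hnohelper a h hka hav
    have hav_ne : a ≠ v := tne hT hav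
    have hOa : ∀ x ∈ k :: t, r x a := by
      intro x hx
      by_contra hxa
      have hax : r a x := tflip hT (hne_of_not_mem hal hx).symm hxa
      by_cases hina : ∃ x' ∈ k :: t, r x' a
      · exact (hm1 a hal hina ⟨x, hx, hax⟩).1 hka
      · push_neg at hina
        have : r a k := tflip hT (hne_of_not_mem hal hkl).symm (hina k hkl)
        exact tnot hT hka this
    have hint : ∃ x ∈ t, r x v := by
      obtain ⟨x, hx, hxv⟩ := hin
      rcases List.mem_cons.mp hx with rfl | hx'
      · exact absurd hxv hnkv
      · exact ⟨x, hx', hxv⟩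
    obtain ⟨t₁, y, t₂, hts, hyv, hall⟩ := exists_last (P := fun z => r z v) t hint
    have hyl : y ∈ k :: t := by rw [hts]; simp
    have hyk : y ≠ k := by
      have h := List.nodup_cons.mp hnd
      rintro rfl
      exact h.1 (by rw [hts]; simp)
    have hyB : r y k := by
      by_contra h
      exact hnohelper y hyl (tflip hT hyk h) hyv
    refine surgery hT hnd hlen3 hch hlast hking' hts hal hvl hav_ne hOa hka hav ?_ hvbeatsk
      (Or.inl hyB)
    intro z hz
    have hzl : z ∈ k :: t := by rw [hts]; simp [hz]
    exact tflip hT (hne_of_not_mem hvl hzl).symm (hall z hz)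
  · -- MOVE 2
    push_neg at hM
    have hOI : ∀ v, v ∉ k :: t → (∀ x ∈ k :: t, r x v) ∨ (∀ x ∈ k :: t, r v x) := by
      intro v hv
      by_cases hin : ∃ x ∈ k :: t, r x v
      · left
        intro x hx
        by_contra hxv
        exact hM v hv hin x hx (tflip hT (hne_of_not_mem hv hx).symm hxv)
      · right
        push_neg at hin
        exact fun x hx => tflip hT (hne_of_not_mem hv hx).symm (hin x hx)
    by_cases hI : ∃ w, w ∉ k :: t ∧ ∀ x ∈ k :: t, r w x
    · obtain ⟨w₀, hw₀l, hw₀⟩ := hI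
      obtain ⟨p, q, hp, hq, hpq⟩ := cross (P := fun z => z ∉ k :: t ∧ ∀ x ∈ k :: t, r z x)
        (hS k w₀) (by simp [hkl]) ⟨hw₀l, hw₀⟩
      have hpl : p ∉ k :: t := fun h => tnot hT (hq.2 p h) hpq
      have hpO : ∀ x ∈ k :: t, r x p := by
        rcases hOI p hpl with h | h
        · exact h
        · exact absurd ⟨hpl, h⟩ hp
      have hpq_ne : p ≠ q := tne hT hpq
      have hkp : r k p := hpO k hkl
      obtain ⟨t₁, y, t₂, hts, hyprop⟩ :
          ∃ t₁ y t₂, t = t₁ ++ y :: t₂ ∧ (r y k ∨ ∀ z ∈ t, r k z) := by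
        by_cases hBy : ∃ y ∈ t, r y k
        · obtain ⟨y, hy, hyk⟩ := hBy
          obtain ⟨t₁, t₂, rfl⟩ := List.append_of_mem hy
          exact ⟨t₁, y, t₂, rfl, Or.inl hyk⟩
        · push_neg at hBy
          have hallA : ∀ z ∈ t, r k z := by
            intro z hz
            refine tflip hT ?_ (hBy z hz)
            have h := List.nodup_cons.mp hnd
            rintro rfl
            exact h.1 hz
          cases t with
          | nil => simp at hlen3
          | cons y t₂ => exact ⟨[], y, t₂, rfl, Or.inr hallA⟩
      refine surgery hT hnd hlen3 hch hlast hking' hts hpl hq.1 hpq_ne hpO hkp hpq ?_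
        (hq.2 k hkl) hyprop
      intro z hz
      have hzl : z ∈ k :: t := by rw [hts]; simp [hz]
      exact hq.2 z hzl
    · exfalso
      obtain ⟨v₀, hv₀⟩ := hout
      obtain ⟨p, q, hp, hq, hpq⟩ := cross (P := fun z => z ∈ k :: t) (hS v₀ k) hv₀ hkl
      rcases hOI p hp with hO | hIp
      · exact tnot hT (hO q hq) hpq
      · exact hI ⟨p, hp, hIp⟩

/-- Base case: a good triangle. -/
lemma base [Fintype V] (hT : IsTournament r) (hS : IsStrong r) (hK : IsKing r k)
    (hn : 3 ≤ Fintype.card V) : ∃ l, GoodC r k l ∧ l.length = 3 := by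
  have hx : ∃ x : V, x ≠ k := by
    have h1 : 1 < Fintype.card V := by omega
    have := Fintype.one_lt_card_iff_nontrivial.mp h1
    exact exists_ne k
  obtain ⟨x, hx⟩ := hx
  obtain ⟨b, c, hb, hc, hbc⟩ := cross (P := fun z => z = k) (hS x k) hx rfl
  rw [hc] at hbc
  obtain ⟨u, hku, hub⟩ : ∃ u, r k u ∧ r u b := by
    rcases hK b hb with h | h
    · exact absurd h (tnot hT hbc)
    · exact h
  have hku_ne : k ≠ u := tne hT hku
  have hub_ne : u ≠ b := tne hT hub
  refine ⟨[k, u, b], goodc_mk rfl ?_ (by simp) ?_ ?_ ?_, by simp⟩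
  · simp [hku_ne, hub_ne, Ne.symm hb]
  · refine List.isChain_cons_cons.mpr ⟨hku, List.isChain_cons_cons.mpr ⟨hub, List.isChain_singleton b⟩⟩
  · intro z hz
    simp at hz
    subst hz
    exact hbc
  · intro v hv hvk
    simp only [List.mem_cons, List.not_mem_nil, or_false] at hv
    rcases hv with rfl | rfl | rfl
    · exact absurd rfl hvk
    · exact Or.inl hku
    · exact Or.inr ⟨u, by simp, hku, hub⟩

end KingCycleAux

theorem main_theorem [Fintype V] (r : V → V → Prop) (k : V)
    (hT : IsTournament r) (hS : IsStrong r) (hK : IsKing r k)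
    (hn : 3 ≤ Fintype.card V) :
    ∃ C : ℕ → List V, ∀ i : ℕ, 3 ≤ i → i ≤ Fintype.card V →
      IsDiCycle r (C i) ∧ (C i).length = i ∧ k ∈ C i ∧
      IsKingOn r {v | v ∈ C i} k := by
  classical
  have key : ∀ i, 3 ≤ i → i ≤ Fintype.card V →
      ∃ l, KingCycleAux.GoodC r k l ∧ l.length = i := by
    intro i h3
    induction i, h3 using Nat.le_induction with
    | base => intro _; exact KingCycleAux.base hT hS hK hn
    | succ i hi ih =>
      intro hc
      obtain ⟨l, hl, hlen⟩ := ih (by omega)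
      obtain ⟨l', hl', hlen'⟩ := KingCycleAux.grow hT hS hK hl (by omega)
      exact ⟨l', hl', by omega⟩
  refine ⟨fun i => if h : 3 ≤ i ∧ i ≤ Fintype.card V then (key i h.1 h.2).choose else [], ?_⟩
  intro i h3 hc
  simp only [dif_pos (And.intro h3 hc)]
  obtain ⟨⟨hhead, hcyc, hkingon⟩, hlen⟩ := (key i h3 hc).choose_spec
  exact ⟨hcyc, hlen, List.mem_of_mem_head? (by rw [hhead]; exact rfl), hkingon⟩
end

section
/- Let T be a strong tournament, k a king with A = N^+(k) and B = N^-(k) both nonempty, and let A_r be the last strong component of the subtournament on A. Then the shortest directed path from any vertex of A_r to k in T has the form a → ... → a* → b* → k with all intermediate vertices in A_r except a single vertex b* ∈ B. -/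
variable {V : Type*}

theorem shortest_path_structure (r : V → V → Prop) (k : V)
    (hT : IsTournament r) (hS : IsStrong r) (hK : IsKing r k)
    (hB : ∃ b, r b k)
    (m : ℕ) (A : Fin (m + 1) → Set V)
    (hne : ∀ i, (A i).Nonempty)
    (hpart : ∀ v, r k v → ∃! i, v ∈ A i)
    (hsub : ∀ i, ∀ v ∈ A i, r k v)
    (hstrong : ∀ i, IsStrongOn r (A i))
    (hforward : ∀ i j : Fin (m + 1), i < j → ∀ a ∈ A i, ∀ b ∈ A j, r a b)
    (a : V) (ha : a ∈ A (Fin.last m))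
    (p : List V) (hchain : p.Chain' r)
    (hhead : p.head? = some a) (hlastk : p.getLast? = some k)
    (hmin : ∀ q : List V, q.Chain' r → q.head? = some a → q.getLast? = some k →
      p.length ≤ q.length) :
    ∃ (q : List V) (b : V), p = q ++ [b, k] ∧
      (∀ v ∈ q, v ∈ A (Fin.last m)) ∧ r b k := by
  classical
  set n := p.length with hn
  have hidx : ∀ {i j : ℕ} (h₁ : i < n) (h₂ : j < n), i = j →
      p[i]'h₁ = p[j]'h₂ := by
    rintro i j h₁ h₂ rfl; rfl
  have hstep : ∀ i, (h : i + 1 < n) → r (p[i]'(by omega)) (p[i+1]'h) := by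
    have hc := List.isChain_iff_getElem.mp hchain
    intro i h
    simpa [List.get_eq_getElem] using hc i (by omega)
  have hnpos : 0 < n := by
    rcases p with _ | ⟨x, t⟩
    · simp at hlastk
    · simp [hn]
  have hget0 : p[0]'hnpos = a := by
    have : p[0]? = some a := by rw [← List.head?_eq_getElem?]; exact hhead
    rw [List.getElem?_eq_getElem hnpos] at this
    exact Option.some_injective _ this
  have hgetlast : p[n-1]'(by omega) = k := by
    have : p[n-1]? = some k := by rw [← List.getLast?_eq_getElem?]; exact hlastk
    rw [List.getElem?_eq_getElem (by omega)] at this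
    exact Option.some_injective _ this
  have hka : r k a := hsub (Fin.last m) a ha
  have hak : a ≠ k := by rintro rfl; exact hT.1 _ hka
  have hn2 : 2 ≤ n := by
    by_contra h
    apply hak
    rw [← hget0, ← hgetlast]
    exact hidx hnpos (by omega) (by omega)
  have htakehead : ∀ i, 0 < i → (p.take i).head? = some a := by
    intro i hi
    rw [List.head?_eq_getElem?, List.getElem?_take]
    simp only [if_pos hi]
    rw [List.getElem?_eq_getElem hnpos, hget0]
  have htakelast : ∀ i, (h : i + 1 ≤ n) →
      (p.take (i+1)).getLast? = some (p[i]'(by omega)) := by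
    intro i h
    have hl : (p.take (i+1)).length = i + 1 := by
      simp [List.length_take]; omega
    rw [List.getLast?_eq_getElem?]
    simp only [hl, Nat.add_sub_cancel]
    rw [List.getElem?_take]
    simp only [if_pos (by omega : i < i + 1)]
    rw [List.getElem?_eq_getElem (by omega : i < n)]
  have hmain : ∀ j, (hj : j < n - 2) → p[j]'(by omega) ∈ A (Fin.last m) := by
    intro j
    induction j with
    | zero => intro _; rw [hget0]; exact ha
    | succ j ih =>
      intro hj
      have hmem : p[j]'(by omega) ∈ A (Fin.last m) := ih (by omega)
      have hrj : r (p[j]'(by omega)) (p[j+1]'(by omega)) := hstep j (by omega)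
      have hlen : (p.take (j+2)).length = j + 2 := by
        simp [List.length_take]; omega
      have hlast2 : (p.take (j+2)).getLast? = some (p[j+1]'(by omega)) :=
        htakelast (j+1) (by omega)
      by_cases hvk : p[j+1]'(by omega) = k
      · exfalso
        have h2 : (p.take (j+2)).getLast? = some k := by rw [hlast2, hvk]
        have := hmin (p.take (j+2)) (hchain.take _) (htakehead _ (by omega)) h2
        rw [hlen] at this
        omega
      · by_cases hkv : r k (p[j+1]'(by omega))
        · obtain ⟨i, hi, -⟩ := hpart _ hkv
          rcases eq_or_lt_of_le (Fin.le_last i) with heq | hlt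
          · rwa [heq] at hi
          · exfalso
            have hvu : r (p[j+1]'(by omega)) (p[j]'(by omega)) :=
              hforward i (Fin.last m) hlt _ hi _ hmem
            have hne' : (p[j]'(by omega) : V) ≠ p[j+1]'(by omega) := by
              rintro heq2; exact hT.1 _ (heq2 ▸ hrj)
            exact (hT.2 _ _ hne').mp hrj hvu
        · exfalso
          have hvk' : r (p[j+1]'(by omega)) k := (hT.2 _ _ hvk).mpr hkv
          have hch : (p.take (j+2) ++ [k]).Chain' r := by
            show List.IsChain r _; rw [List.isChain_append]
            refine ⟨hchain.take _, List.isChain_singleton k, ?_⟩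
            intro x hx y hy
            rw [hlast2] at hx
            simp only [Option.mem_def, Option.some.injEq, List.head?_cons] at hx hy
            subst hx; subst hy
            exact hvk'
          have h1 : (p.take (j+2) ++ [k]).head? = some a := by
            rw [List.head?_append, htakehead _ (by omega : 0 < j + 2)]
            rfl
          have h2 : (p.take (j+2) ++ [k]).getLast? = some k :=
            List.getLast?_concat
          have := hmin _ hch h1 h2
          simp only [List.length_append, hlen, List.length_cons,
            List.length_nil] at this
          omega
  have hd1 : p.drop (n-2) = [p[n-2]'(by omega), p[n-1]'(by omega)] := by
    rw [List.drop_eq_getElem_cons (by omega : n - 2 < p.length)]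
    rw [List.drop_eq_getElem_cons (by omega : n - 2 + 1 < p.length)]
    congr 1
    congr 1
    · exact hidx (by omega) (by omega) (by omega)
    · rw [List.drop_eq_nil_of_le]
      omega
  refine ⟨p.take (n-2), p[n-2]'(by omega), ?_, ?_, ?_⟩
  · conv_lhs => rw [← List.take_append_drop (n-2) p]
    rw [hd1, hgetlast]
  · intro v hv
    obtain ⟨j, hj, rfl⟩ := List.mem_iff_getElem.mp hv
    have hj' : j < n - 2 := by
      have := hj; simp only [List.length_take] at this; omega
    have := hmain j hj'
    simpa [List.getElem_take] using this
  · have h := hstep (n-2) (by omega)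
    rw [hidx (by omega) (by omega) (by omega : n - 2 + 1 = n - 1), hgetlast] at h
    exact h
end

section
/- Every strong tournament on n ≥ 3 vertices contains, for each 3 ≤ i ≤ n, a strong subtournament on i vertices, and moreover these can be chosen nested: there exist vertex sets S_3 ⊆ S_4 ⊆ ... ⊆ S_n with |S_i| = i, each inducing a strong subtournament. -/
variable {V : Type*}

/-- If a path goes from outside `P` to inside `P`, some edge crosses into `P`. -/
lemma cross_edge {rel : V → V → Prop} {P : V → Prop} {a b : V}
    (h : Relation.ReflTransGen rel a b) (ha : ¬ P a) :
    P b → ∃ x y, ¬ P x ∧ P y ∧ rel x y := by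
  induction h with
  | refl => exact fun hb => absurd hb ha
  | @tail m e hm hme ih =>
    intro he
    by_cases hc : P m
    · exact ih hc
    · exact ⟨m, e, hc, he, hme⟩

/-- Gluing lemma: if `a` beats all of `S0`, all of `S0` beats `b`, and `b` beats `a`,
then `S0 ∪ {a, b}` is strong (no strongness assumption on `S0`). -/
lemma glue [DecidableEq V] {r : V → V → Prop} {S0 : Finset V} {a b : V}
    (hne : S0.Nonempty) (haS : a ∉ S0) (hbS : b ∉ S0) (hba : r b a)
    (haAll : ∀ s ∈ S0, r a s) (hAllb : ∀ s ∈ S0, r s b) :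
    IsStrongOn r ↑(insert a (insert b S0)) := by
  obtain ⟨s0, hs0⟩ := hne
  set T : Finset V := insert a (insert b S0) with hTdef
  have hmem : ∀ x, x ∈ (↑T : Set V) ↔ x = a ∨ x = b ∨ x ∈ S0 := by
    intro x; simp [hTdef]
  have haT : a ∈ (↑T : Set V) := (hmem a).2 (Or.inl rfl)
  have hbT : b ∈ (↑T : Set V) := (hmem b).2 (Or.inr (Or.inl rfl))
  have hsT : ∀ s ∈ S0, s ∈ (↑T : Set V) := fun s hs => (hmem s).2 (Or.inr (Or.inr hs))
  intro x hx y hy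
  have step : ∀ u v : V, u ∈ (↑T : Set V) → v ∈ (↑T : Set V) → r u v →
      Relation.ReflTransGen (fun p q => p ∈ (↑T : Set V) ∧ q ∈ (↑T : Set V) ∧ r p q) u v :=
    fun u v hu hv hr => Relation.ReflTransGen.single ⟨hu, hv, hr⟩
  have toa : Relation.ReflTransGen (fun p q => p ∈ (↑T : Set V) ∧ q ∈ (↑T : Set V) ∧ r p q) x a := by
    rcases (hmem x).1 hx with h | h | h
    · subst h; exact Relation.ReflTransGen.refl
    · subst h; exact step _ _ hbT haT hba
    · exact (step _ _ (hsT x h) hbT (hAllb x h)).trans (step _ _ hbT haT hba)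
  have froma : Relation.ReflTransGen (fun p q => p ∈ (↑T : Set V) ∧ q ∈ (↑T : Set V) ∧ r p q) a y := by
    rcases (hmem y).1 hy with h | h | h
    · subst h; exact Relation.ReflTransGen.refl
    · subst h
      exact (step _ _ haT (hsT s0 hs0) (haAll s0 hs0)).trans
        (step _ _ (hsT s0 hs0) hbT (hAllb s0 hs0))
    · exact step _ _ haT (hsT y h) (haAll y h)
  exact toa.trans froma

/-- A vertex with both an out-neighbour and an in-neighbour in a strong set
can be added keeping strongness. -/
lemma extend_strong [DecidableEq V] {r : V → V → Prop} {S : Finset V} {v p q : V}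
    (hS : IsStrongOn r ↑S) (hv : v ∉ S) (hp : p ∈ S) (hq : q ∈ S)
    (hvp : r v p) (hqv : r q v) :
    IsStrongOn r ↑(insert v S) := by
  set T : Finset V := insert v S with hTdef
  have hmem : ∀ x, x ∈ (↑T : Set V) ↔ x = v ∨ x ∈ S := by
    intro x; simp [hTdef]
  have hvT : v ∈ (↑T : Set V) := (hmem v).2 (Or.inl rfl)
  have hsT : ∀ s ∈ S, s ∈ (↑T : Set V) := fun s hs => (hmem s).2 (Or.inr hs)
  have lift : ∀ {x y : V},
      Relation.ReflTransGen (fun p q => p ∈ (↑S : Set V) ∧ q ∈ (↑S : Set V) ∧ r p q) x y →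
      Relation.ReflTransGen (fun p q => p ∈ (↑T : Set V) ∧ q ∈ (↑T : Set V) ∧ r p q) x y :=
    fun h => Relation.ReflTransGen.mono (p := fun p q => p ∈ (↑T : Set V) ∧ q ∈ (↑T : Set V) ∧ r p q) (fun a b hab => ⟨hsT a hab.1, hsT b hab.2.1, hab.2.2⟩) _ _ h
  intro x hx y hy
  have step : ∀ u w : V, u ∈ (↑T : Set V) → w ∈ (↑T : Set V) → r u w →
      Relation.ReflTransGen (fun p q => p ∈ (↑T : Set V) ∧ q ∈ (↑T : Set V) ∧ r p q) u w :=
    fun u w hu hw hr => Relation.ReflTransGen.single ⟨hu, hw, hr⟩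
  have tov : Relation.ReflTransGen (fun p q => p ∈ (↑T : Set V) ∧ q ∈ (↑T : Set V) ∧ r p q) x v := by
    rcases (hmem x).1 hx with h | h
    · subst h; exact Relation.ReflTransGen.refl
    · exact (lift (hS x h q hq)).trans (step _ _ (hsT q hq) hvT hqv)
  have fromv : Relation.ReflTransGen (fun p q => p ∈ (↑T : Set V) ∧ q ∈ (↑T : Set V) ∧ r p q) v y := by
    rcases (hmem y).1 hy with h | h
    · subst h; exact Relation.ReflTransGen.refl
    · exact (step _ _ hvT (hsT p hp) hvp).trans (lift (hS p hp y h))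
  exact tov.trans fromv

/-- Deletion lemma: a strong set of size at least 4 has a vertex whose removal
keeps it strong. -/
lemma del_lemma [DecidableEq V] {r : V → V → Prop} (hT : IsTournament r) {W : Finset V}
    (hW : IsStrongOn r ↑W) (h4 : 4 ≤ W.card) :
    ∃ x ∈ W, IsStrongOn r ↑(W.erase x) := by
  classical
  have asym : ∀ x y : V, r x y → ¬ r y x := by
    intro x y hxy hyx
    by_cases h : x = y
    · exact hT.1 x (h ▸ hxy)
    · exact (hT.2 x y h).1 hxy hyx
  have total : ∀ x y : V, x ≠ y → ¬ r y x → r x y := fun x y h hn => (hT.2 x y h).2 hn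
  obtain ⟨w0, hw0⟩ := Finset.card_pos.mp (show 0 < W.card by omega)
  set F : Finset (Finset V) :=
    W.powerset.filter (fun S => S ≠ W ∧ IsStrongOn r ↑S) with hFdef
  have hsingF : ({w0} : Finset V) ∈ F := by
    rw [hFdef, Finset.mem_filter, Finset.mem_powerset]
    refine ⟨Finset.singleton_subset_iff.2 hw0, ?_, ?_⟩
    · intro h
      have : W.card = 1 := by rw [← h]; simp
      omega
    · intro x hx y hy
      have hx' : x = w0 := by simpa using hx
      have hy' : y = w0 := by simpa using hy
      subst hx'; subst hy'; exact Relation.ReflTransGen.refl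
  obtain ⟨S, hSF, hmax⟩ := F.exists_max_image Finset.card ⟨_, hsingF⟩
  rw [hFdef, Finset.mem_filter, Finset.mem_powerset] at hSF
  obtain ⟨hSW, hSne, hSstrong⟩ := hSF
  have hSlt : S.card < W.card := Finset.card_lt_card (hSW.ssubset_of_ne (by exact_mod_cast hSne))
  have hS1 : 1 ≤ S.card := by
    have := hmax _ hsingF
    simpa using this
  by_cases hcase : S.card + 1 = W.card
  · -- S is W minus one vertex
    obtain ⟨x, hxW, hxS⟩ := Finset.exists_of_ssubset (hSW.ssubset_of_ne hSne)
    have hsub : S ⊆ W.erase x := Finset.subset_erase.2 ⟨hSW, hxS⟩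
    have heq : S = W.erase x := by
      apply Finset.eq_of_subset_of_card_le hsub
      rw [Finset.card_erase_of_mem hxW]; omega
    exact ⟨x, hxW, heq ▸ hSstrong⟩
  · have hc2 : S.card + 2 ≤ W.card := by omega
    obtain ⟨s0, hs0⟩ := Finset.card_pos.mp (by omega : 0 < S.card)
    -- dichotomy for outside vertices
    have dich : ∀ v ∈ W, v ∉ S → (∀ s ∈ S, r v s) ∨ (∀ s ∈ S, r s v) := by
      intro v hvW hvS
      by_contra hcon
      push_neg at hcon
      obtain ⟨⟨s1, hs1, hns1⟩, s2, hs2, hns2⟩ := hcon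
      have hv1 : s1 ≠ v := fun h => hvS (h ▸ hs1)
      have hv2 : v ≠ s2 := fun h => hvS (h.symm ▸ hs2)
      have h1 : r s1 v := total s1 v hv1 hns1
      have h2 : r v s2 := total v s2 hv2 hns2
      have hstr := extend_strong hSstrong hvS hs2 hs1 h2 h1
      have hmemF : insert v S ∈ F := by
        rw [hFdef, Finset.mem_filter, Finset.mem_powerset]
        refine ⟨Finset.insert_subset hvW hSW, ?_, hstr⟩
        intro h
        have : (insert v S).card = W.card := by rw [h]
        rw [Finset.card_insert_of_notMem hvS] at this
        omega
      have := hmax _ hmemF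
      rw [Finset.card_insert_of_notMem hvS] at this
      omega
    -- find a vertex a beating all of S
    obtain ⟨o, hoW, hoS⟩ := Finset.exists_of_ssubset (hSW.ssubset_of_ne hSne)
    have hpath1 := hW o (Finset.mem_coe.2 hoW) s0 (Finset.mem_coe.2 (hSW hs0))
    obtain ⟨x, y, hxnS, hyS, hxWc, hyWc, hrxy⟩ :=
      cross_edge (P := fun z => z ∈ S) hpath1 hoS hs0
    have hxW : x ∈ W := Finset.mem_coe.1 hxWc
    have haA : ∀ s ∈ S, r x s := by
      rcases dich x hxW hxnS with h | h
      · exact h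
      · exact absurd hrxy (asym y x (h y hyS))
    clear hrxy hyS hyWc
    -- find an edge from a "dominated" vertex b into the set A
    set A : V → Prop := fun z => z ∈ W ∧ z ∉ S ∧ ∀ s ∈ S, r z s with hAdef
    have hpath2 := hW s0 (Finset.mem_coe.2 (hSW hs0)) x (Finset.mem_coe.2 hxW)
    have hs0A : ¬ A s0 := fun h => h.2.1 hs0
    obtain ⟨b, a, hbnA, haA', hbWc, haWc, hrba⟩ :=
      cross_edge (P := A) hpath2 hs0A ⟨hxW, hxnS, haA⟩
    obtain ⟨haW, hanS, haAll⟩ := haA'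
    have hbW : b ∈ W := Finset.mem_coe.1 hbWc
    have hbnS : b ∉ S := by
      intro hbS
      exact asym a b (haAll b hbS) hrba
    have hAllb : ∀ s ∈ S, r s b := by
      rcases dich b hbW hbnS with h | h
      · exact absurd ⟨hbW, hbnS, h⟩ hbnA
      · exact h
    have hab : a ≠ b := by
      intro h
      exact hT.1 b (h ▸ hrba)
    set T' : Finset V := insert a (insert b S) with hT'def
    have hT'strong : IsStrongOn r ↑T' := glue ⟨s0, hs0⟩ hanS hbnS hrba haAll hAllb
    have hT'W : T' ⊆ W := by
      rw [hT'def]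
      exact Finset.insert_subset haW (Finset.insert_subset hbW hSW)
    have hT'card : T'.card = S.card + 2 := by
      rw [hT'def, Finset.card_insert_of_notMem (by simp [hab, hanS]),
        Finset.card_insert_of_notMem hbnS]
    by_cases hTW : T' = W
    · -- W = S ∪ {a, b}; removing any vertex of S keeps strongness
      have has0 : a ≠ s0 := fun h => hanS (h ▸ hs0)
      have hbs0 : b ≠ s0 := fun h => hbnS (h ▸ hs0)
      have key : W.erase s0 = insert a (insert b (S.erase s0)) := by
        rw [← hTW, hT'def]
        ext z
        simp only [Finset.mem_erase, Finset.mem_insert]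
        constructor
        · rintro ⟨hz, (rfl | rfl | hzS)⟩
          · exact Or.inl rfl
          · exact Or.inr (Or.inl rfl)
          · exact Or.inr (Or.inr ⟨hz, hzS⟩)
        · rintro (rfl | rfl | ⟨hz, hzS⟩)
          · exact ⟨has0, Or.inl rfl⟩
          · exact ⟨hbs0, Or.inr (Or.inl rfl)⟩
          · exact ⟨hz, Or.inr (Or.inr hzS)⟩
      have hScard2 : 2 ≤ S.card := by
        have : T'.card = W.card := by rw [hTW]
        omega
      have hSe : (S.erase s0).Nonempty := by
        rw [← Finset.card_pos, Finset.card_erase_of_mem hs0]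
        omega
      have : IsStrongOn r ↑(W.erase s0) := by
        rw [key]
        exact glue hSe (fun h => hanS (Finset.mem_of_mem_erase h))
          (fun h => hbnS (Finset.mem_of_mem_erase h)) hrba
          (fun s hs => haAll s (Finset.mem_of_mem_erase hs))
          (fun s hs => hAllb s (Finset.mem_of_mem_erase hs))
      exact ⟨s0, hSW hs0, this⟩
    · have hT'F : T' ∈ F := by
        rw [hFdef, Finset.mem_filter, Finset.mem_powerset]
        exact ⟨hT'W, hTW, hT'strong⟩
      have := hmax _ hT'F
      omega

/-- Chain lemma: from a strong set of size `k ≥ 3` we get a nested chain of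
strong sets of all sizes `3, …, k`. -/
lemma chain_lemma [DecidableEq V] {r : V → V → Prop} (hT : IsTournament r) :
    ∀ k : ℕ, 3 ≤ k → ∀ W : Finset V, IsStrongOn r ↑W → W.card = k →
      ∃ S : ℕ → Finset V, S k = W ∧
        (∀ i, 3 ≤ i → i ≤ k → (S i).card = i ∧ IsStrongOn r ↑(S i)) ∧
        (∀ i, 3 ≤ i → i + 1 ≤ k → S i ⊆ S (i + 1)) := by
  intro k hk
  induction k, hk using Nat.le_induction with
  | base =>
    intro W hW hc
    refine ⟨fun _ => W, rfl, ?_, ?_⟩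
    · intro i h3 hi
      have h3' : i = 3 := le_antisymm hi h3
      subst h3'
      exact ⟨hc, hW⟩
    · intro i h3 hi
      exact absurd (h3.trans (Nat.le_of_succ_le hi)) (by omega)
  | succ k hk ih =>
    intro W hW hc
    obtain ⟨x, hxW, hxs⟩ := del_lemma hT hW (by omega)
    obtain ⟨S', hS'k, hS'p, hS'm⟩ := ih (W.erase x) hxs
      (by rw [Finset.card_erase_of_mem hxW, hc]; omega)

    have hnk : ¬ (k + 1 ≤ k) := by omega
    refine ⟨fun i => if i ≤ k then S' i else W, ?_, ?_, ?_⟩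
    · simp [hnk]
    · intro i h3 hi
      by_cases h : i ≤ k
      · simpa [h] using hS'p i h3 h
      · have hik : i = k + 1 := by omega
        subst hik
        refine ⟨by simp [hnk, hc], by simpa [hnk] using hW⟩
    · intro i h3 hi
      by_cases h : i + 1 ≤ k
      · have hik : i ≤ k := by omega
        simpa [hik, h] using hS'm i h3 h
      · have hik : i = k := by omega
        subst hik
        simp only [le_refl, if_pos, if_neg hnk]
        rw [hS'k]
        exact Finset.erase_subset x W
  
theorem nested_strong_subtournaments [Fintype V] [DecidableEq V] (r : V → V → Prop)
    (hT : IsTournament r) (hS : IsStrong r) (hn : 3 ≤ Fintype.card V) :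
    ∃ S : ℕ → Finset V,
      (∀ i : ℕ, 3 ≤ i → i ≤ Fintype.card V →
        (S i).card = i ∧ IsStrongOn r ↑(S i)) ∧
      (∀ i : ℕ, 3 ≤ i → i + 1 ≤ Fintype.card V → S i ⊆ S (i + 1)) := by
  have hWs : IsStrongOn r ↑(Finset.univ : Finset V) := by
    intro x hx y hy
    exact Relation.ReflTransGen.mono (p := fun a b => a ∈ (↑(Finset.univ : Finset V) : Set V) ∧ b ∈ (↑(Finset.univ : Finset V) : Set V) ∧ r a b) (fun a b hab => ⟨by simp, by simp, hab⟩) _ _ (hS x y)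
  obtain ⟨S, hSk, hp, hm⟩ :=
    chain_lemma hT (Fintype.card V) hn Finset.univ hWs Finset.card_univ
  exact ⟨S, hp, hm⟩
end
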